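/- arXiv:1707.08028 — 5 statements merged into one kernel-verified Lean document; each statement's English description precedes it below -/
import Mathlib

section
/- Let f : ℝⁿ → ℝ be twice continuously differentiable with L-Lipschitz Hessian, let m > 0, and let x_c be a critical point of f (∇f(x_c) = 0) such that every eigenvalue of ∇²f(x_c) satisfies |λ_i(∇²f(x_c))| ≥ 2m. Then for every x ∈ ℝⁿ with ‖x − x_c‖ ≤ m/L, it holds that m‖x − x_c‖ ≤ ‖∇f(x)‖. -/
open scoped InnerProductSpace
open InnerProductSpace

/-!
Let `H = ∇²f(x_c)`, `d = x - x_c` and `r = ‖d‖`. By the spectral theorem, `‖H d‖ ≥ 2m r`.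
Since `∇f - H` has derivative `∇²f(y) - H`, of norm at most `L r` on the ball of radius `r`
around `x_c`, the mean value inequality gives `‖∇f(x) - H d‖ ≤ L r² ≤ m r`.
Hence `‖∇f(x)‖ ≥ 2m r - m r`.
-/

theorem LinearMap.IsSymmetric.mul_norm_le_norm_apply {𝕜 E : Type*} [RCLike 𝕜]
    [NormedAddCommGroup E] [InnerProductSpace 𝕜 E] [FiniteDimensional 𝕜 E] {T : E →ₗ[𝕜] E}
    {n : ℕ} (hT : T.IsSymmetric) (hn : Module.finrank 𝕜 E = n) {c : ℝ} (hc : 0 ≤ c)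
    (h : ∀ i, c ≤ |hT.eigenvalues hn i|) (v : E) :
    c * ‖v‖ ≤ ‖T v‖ := by
  set b := hT.eigenvectorBasis hn
  have hv : ‖v‖ ^ 2 = ∑ i, ‖b.repr v i‖ ^ 2 := by
    rw [← b.repr.norm_map, EuclideanSpace.norm_sq_eq]
  have hTv : ‖T v‖ ^ 2 = ∑ i, (|hT.eigenvalues hn i| * ‖b.repr v i‖) ^ 2 := by
    rw [← b.repr.norm_map, EuclideanSpace.norm_sq_eq]
    simp only [b, hT.eigenvectorBasis_apply_self_apply, norm_mul, RCLike.norm_ofReal]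
  refine (pow_le_pow_iff_left₀ (by positivity) (norm_nonneg _) two_ne_zero).1 ?_
  rw [hTv, mul_pow, hv, Finset.mul_sum]
  gcongr with i
  rw [mul_pow]
  gcongr
  exact h i

theorem Matrix.IsHermitian.mul_norm_le_norm_toEuclideanLin {n : ℕ}
    {A : Matrix (Fin n) (Fin n) ℝ} (hA : A.IsHermitian) {c : ℝ} (hc : 0 ≤ c)
    (h : ∀ i, c ≤ |hA.eigenvalues i|) (v : EuclideanSpace ℝ (Fin n)) :
    c * ‖v‖ ≤ ‖Matrix.toEuclideanLin A v‖ :=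
  (Matrix.isSymmetric_toEuclideanLin_iff.mpr hA).mul_norm_le_norm_apply finrank_euclideanSpace hc
    (fun i => by
      simpa [Matrix.IsHermitian.eigenvalues, Matrix.IsHermitian.eigenvalues₀] using
        h (Fintype.equivOfCardEq (Fintype.card_fin _) i)) v

theorem hasFDerivAt_gradient {E : Type*} [NormedAddCommGroup E] [InnerProductSpace ℝ E]
    [CompleteSpace E] {f : E → ℝ} {x : E} (h : DifferentiableAt ℝ (fderiv ℝ f) x) :
    HasFDerivAt (gradient f)
      ((toDual ℝ E).symm.toContinuousLinearEquiv.toContinuousLinearMap ∘L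
        fderiv ℝ (fderiv ℝ f) x) x :=
  (toDual ℝ E).symm.toContinuousLinearEquiv.hasFDerivAt.comp x h.hasFDerivAt

theorem hasFDerivAt_gradient_of_iteratedFDeriv_two_eq {n : ℕ}
    {f : EuclideanSpace ℝ (Fin n) → ℝ} {x : EuclideanSpace ℝ (Fin n)}
    {H : Matrix (Fin n) (Fin n) ℝ} (hf : DifferentiableAt ℝ (fderiv ℝ f) x)
    (hH : ∀ u v, iteratedFDeriv ℝ 2 f x ![u, v] = ⟪u, Matrix.toEuclideanLin H v⟫_ℝ)
    (hsymm : H.IsHermitian) :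
    HasFDerivAt (gradient f) (Matrix.toEuclideanCLM (𝕜 := ℝ) H) x := by
  refine (hasFDerivAt_gradient hf).congr_fderiv <|
    ContinuousLinearMap.ext fun u => ext_inner_right ℝ fun v => ?_
  calc ⟪(toDual ℝ _).symm (fderiv ℝ (fderiv ℝ f) x u), v⟫_ℝ
      = ⟪u, Matrix.toEuclideanLin H v⟫_ℝ := by
        simpa [toDual_symm_apply, iteratedFDeriv_two_apply] using hH u v
    _ = ⟪Matrix.toEuclideanLin H u, v⟫_ℝ :=
        (Matrix.isSymmetric_toEuclideanLin_iff.mpr hsymm u v).symm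

/-- If `f : ℝⁿ → ℝ` is twice continuously differentiable with `L`-Lipschitz Hessian,
`x_c` is a critical point of `f` at which every eigenvalue of the Hessian has absolute value
at least `2m` (with `m > 0`), then every point `x` with `‖x - x_c‖ ≤ m/L` satisfies
`m‖x - x_c‖ ≤ ‖∇f(x)‖`. Here `Hess x` is the Hessian matrix of `f` at `x`, characterized by
`⟪u, Hess x v⟫ = D²f(x)[u, v]`. -/
theorem gradient_lower_bound_near_nondegenerate_critical_point {n : ℕ}
    (f : EuclideanSpace ℝ (Fin n) → ℝ) (L m : ℝ)
    (Hess : EuclideanSpace ℝ (Fin n) → Matrix (Fin n) (Fin n) ℝ)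
    (hf : ContDiff ℝ 2 f)
    (hHessf : ∀ x u v, iteratedFDeriv ℝ 2 f x ![u, v] = ⟪u, Matrix.toEuclideanLin (Hess x) v⟫_ℝ)
    (hsymm : ∀ x, (Hess x).IsHermitian)
    (hLip : ∀ x y, ‖Matrix.toEuclideanCLM (𝕜 := ℝ) (Hess x - Hess y)‖ ≤ L * ‖x - y‖)
    (hm : 0 < m)
    (xc : EuclideanSpace ℝ (Fin n)) (hcrit : gradient f xc = 0)
    (heig : ∀ i, 2 * m ≤ |(hsymm xc).eigenvalues i|)
    (x : EuclideanSpace ℝ (Fin n)) (hx : ‖x - xc‖ ≤ m / L) :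
    m * ‖x - xc‖ ≤ ‖gradient f x‖ := by
  set r := ‖x - xc‖
  have hL : 0 ≤ L := by
    by_contra! hL
    linarith [div_neg_of_pos_of_neg hm hL, norm_nonneg (x - xc)]
  have hLr : L * r ≤ m := by
    rcases hL.eq_or_lt with rfl | hL
    · simpa using hm.le
    · exact (le_div_iff₀' hL).1 hx
  set A := Matrix.toEuclideanCLM (𝕜 := ℝ) (Hess xc)
  have hderiv y : HasFDerivAt (gradient f) (Matrix.toEuclideanCLM (𝕜 := ℝ) (Hess y)) y :=
    hasFDerivAt_gradient_of_iteratedFDeriv_two_eq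
      ((hf.fderiv_right le_rfl).differentiable one_ne_zero y) (hHessf y) (hsymm y)
  have hbound : ∀ y ∈ Metric.closedBall xc r,
      ‖Matrix.toEuclideanCLM (𝕜 := ℝ) (Hess y) - A‖ ≤ L * r := fun y hy => by
    rw [← map_sub]
    exact (hLip y xc).trans (by gcongr; simpa [dist_eq_norm] using hy)
  have hlin : ‖gradient f x - A (x - xc)‖ ≤ L * r * r := by
    simpa [hcrit] using (convex_closedBall xc r).norm_image_sub_le_of_norm_hasFDerivWithin_le'
      (fun y _ => (hderiv y).hasFDerivWithinAt) hbound
      (Metric.mem_closedBall_self (norm_nonneg _)) (by simp [r, dist_eq_norm])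
  have hA : 2 * m * r ≤ ‖A (x - xc)‖ :=
    (hsymm xc).mul_norm_le_norm_toEuclideanLin (by positivity) heig (x - xc)
  have hquad : L * r * r ≤ m * r := mul_le_mul_of_nonneg_right hLr (norm_nonneg _)
  linarith [norm_le_norm_add_norm_sub (gradient f x) (A (x - xc))]
end

section
/- Let f : ℝⁿ → ℝ be twice continuously differentiable with L-Lipschitz Hessian, let m > 0, and let H be a real symmetric n×n matrix with m·I ⪯ H and ∇²f(x) ⪯ H at a point x ∈ ℝⁿ. Set Δx = −H⁻¹∇f(x). Then f(x + Δx) ≤ f(x) + (1/2)⟨∇f(x), Δx⟩·(1 − (L/(3m²))‖∇f(x)‖). -/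
/-!
Along the segment `t ↦ x + t • Δx`, the bound `∇²f(x) ⪯ H` and the Lipschitz continuity of the
Hessian give `⟪Δx, ∇²f(x + t • Δx) Δx⟫ ≤ c + L‖Δx‖³ t` with `c = ⟪∇f(x), H⁻¹∇f(x)⟫ = ⟪Δx, H Δx⟫`;
integrating twice yields `f(x + Δx) ≤ f(x) - c + c/2 + L‖Δx‖³/6`. Finally `m • 1 ⪯ H` gives
`m‖Δx‖² ≤ c ≤ ‖∇f(x)‖‖Δx‖`, hence `m²‖Δx‖³ ≤ c‖∇f(x)‖`, which turns the cubic term into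
`c L ‖∇f(x)‖ / (6m²)`.
-/

open scoped InnerProductSpace
open Set

theorem apply_le_apply_left_of_hasDerivAt_nonpos {ψ ψ' : ℝ → ℝ} {a b t : ℝ}
    (hψ : ∀ s, HasDerivAt ψ (ψ' s) s) (hψ' : ∀ s ∈ Ioo a b, ψ' s ≤ 0) (ht : t ∈ Icc a b) :
    ψ t ≤ ψ a :=
  antitoneOn_of_hasDerivWithinAt_nonpos (convex_Icc a b)
    (fun s _ ↦ (hψ s).continuousAt.continuousWithinAt) (fun s _ ↦ (hψ s).hasDerivWithinAt)
    (by rwa [interior_Icc]) (left_mem_Icc.2 (ht.1.trans ht.2)) ht ht.1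

theorem apply_one_le_of_deriv2_le_add_mul {φ φ' φ'' : ℝ → ℝ} {c K : ℝ}
    (hφ : ∀ t, HasDerivAt φ (φ' t) t) (hφ' : ∀ t, HasDerivAt φ' (φ'' t) t)
    (hφ'' : ∀ t ∈ Icc (0 : ℝ) 1, φ'' t ≤ c + K * t) :
    φ 1 ≤ φ 0 + φ' 0 + c / 2 + K / 6 := by
  have hψ' (t : ℝ) : HasDerivAt (fun s ↦ φ' s - φ' 0 - c * s - K / 2 * s ^ 2)
      (φ'' t - c - K * t) t :=
    (((hφ' t).sub_const (φ' 0)).sub ((hasDerivAt_id' t).const_mul c)).sub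
      ((hasDerivAt_pow 2 t).const_mul (K / 2)) |>.congr_deriv (by norm_num; ring)
  have hψ (t : ℝ) : HasDerivAt (fun s ↦ φ s - φ 0 - φ' 0 * s - c / 2 * s ^ 2 - K / 6 * s ^ 3)
      (φ' t - φ' 0 - c * t - K / 2 * t ^ 2) t :=
    ((((hφ t).sub_const (φ 0)).sub ((hasDerivAt_id' t).const_mul (φ' 0))).sub
      ((hasDerivAt_pow 2 t).const_mul (c / 2))).sub ((hasDerivAt_pow 3 t).const_mul (K / 6))
      |>.congr_deriv (by norm_num; ring)
  have hslope : ∀ t ∈ Icc (0 : ℝ) 1, φ' t - φ' 0 - c * t - K / 2 * t ^ 2 ≤ 0 := fun t ht ↦ by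
    simpa using apply_le_apply_left_of_hasDerivAt_nonpos hψ'
      (fun s hs ↦ sub_nonpos.2 <| by linarith [hφ'' s (Ioo_subset_Icc_self hs)]) ht
  have hend := apply_le_apply_left_of_hasDerivAt_nonpos hψ
    (fun s hs ↦ hslope s (Ioo_subset_Icc_self hs)) (right_mem_Icc.2 zero_le_one)
  norm_num at hend
  linarith

section Segment

variable {E : Type*} [NormedAddCommGroup E] [NormedSpace ℝ E] {f : E → ℝ}

theorem ContDiff.hasDerivAt_comp_add_smul (hf : ContDiff ℝ 2 f) (x d : E) (t : ℝ) :
    HasDerivAt (fun s : ℝ ↦ f (x + s • d)) (fderiv ℝ f (x + t • d) d) t :=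
  ((hf.differentiable two_ne_zero _).hasFDerivAt.comp_hasDerivAt t
    (((hasDerivAt_id' t).smul_const d).const_add x)).congr_deriv (by simp)

theorem ContDiff.hasDerivAt_fderiv_comp_add_smul (hf : ContDiff ℝ 2 f) (x d : E) (t : ℝ) :
    HasDerivAt (fun s : ℝ ↦ fderiv ℝ f (x + s • d) d)
      (iteratedFDeriv ℝ 2 f (x + t • d) ![d, d]) t := by
  have hf' : Differentiable ℝ (fderiv ℝ f) :=
    (hf.fderiv_right le_rfl).differentiable one_ne_zero
  have hline := ((hasDerivAt_id' t).smul_const d).const_add x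
  have := ((hf' _).hasFDerivAt.comp_hasDerivAt t hline).clm_apply (hasDerivAt_const t d)
  rw [iteratedFDeriv_two_apply]
  simpa using this

theorem ContDiff.apply_add_le_of_iteratedFDeriv_two_le (hf : ContDiff ℝ 2 f) {x d : E}
    {c K : ℝ} (h : ∀ t ∈ Icc (0 : ℝ) 1, iteratedFDeriv ℝ 2 f (x + t • d) ![d, d] ≤ c + K * t) :
    f (x + d) ≤ f x + fderiv ℝ f x d + c / 2 + K / 6 := by
  simpa using apply_one_le_of_deriv2_le_add_mul (hf.hasDerivAt_comp_add_smul x d)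
    (hf.hasDerivAt_fderiv_comp_add_smul x d) h

end Segment

theorem ContinuousLinearMap.real_inner_self_apply_le {F : Type*} [NormedAddCommGroup F]
    [InnerProductSpace ℝ F] (T : F →L[ℝ] F) (v : F) : ⟪v, T v⟫_ℝ ≤ ‖T‖ * ‖v‖ ^ 2 :=
  calc ⟪v, T v⟫_ℝ ≤ ‖v‖ * ‖T v‖ := real_inner_le_norm _ _
    _ ≤ ‖v‖ * (‖T‖ * ‖v‖) := by gcongr; exact T.le_opNorm v
    _ = ‖T‖ * ‖v‖ ^ 2 := by ring

theorem sq_mul_norm_pow_three_le {F : Type*} [NormedAddCommGroup F] [InnerProductSpace ℝ F]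
    {g v : F} {m : ℝ} (hm : 0 ≤ m) (h : m * ‖v‖ ^ 2 ≤ ⟪g, v⟫_ℝ) :
    m ^ 2 * ‖v‖ ^ 3 ≤ ⟪g, v⟫_ℝ * ‖g‖ := by
  rcases eq_or_ne v 0 with rfl | hv
  · simp
  have hmv : m * ‖v‖ ≤ ‖g‖ := by
    refine le_of_mul_le_mul_right ?_ (norm_pos_iff.2 hv)
    nlinarith [real_inner_le_norm g v]
  calc m ^ 2 * ‖v‖ ^ 3 = (m * ‖v‖ ^ 2) * (m * ‖v‖) := by ring
    _ ≤ ⟪g, v⟫_ℝ * ‖g‖ :=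
      mul_le_mul h hmv (by positivity) ((by positivity : (0 : ℝ) ≤ m * ‖v‖ ^ 2).trans h)

namespace Matrix

variable {n : Type*} [DecidableEq n]

theorem PosSemidef.posDef_of_sub_smul_one {H : Matrix n n ℝ} {m : ℝ} (hm : 0 < m)
    (h : (H - m • 1).PosSemidef) : H.PosDef := by
  simpa using (PosDef.one.smul hm).add_posSemidef h

variable [Fintype n]

theorem PosSemidef.inner_toEuclideanLin_le {A B : Matrix n n ℝ} (h : (B - A).PosSemidef)
    (v : EuclideanSpace ℝ n) : ⟪v, toEuclideanLin A v⟫_ℝ ≤ ⟪v, toEuclideanLin B v⟫_ℝ := by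
  simpa [inner_sub_right] using (isPositive_toEuclideanLin_iff.2 h).inner_nonneg_right v

theorem toEuclideanLin_apply_toEuclideanLin_inv {H : Matrix n n ℝ} (hH : IsUnit H)
    (g : EuclideanSpace ℝ n) : toEuclideanLin H (toEuclideanLin H⁻¹ g) = g := by
  rw [← LinearMap.comp_apply, ← toLpLin_mul_same,
    mul_nonsing_inv H ((isUnit_iff_isUnit_det H).1 hH), toLpLin_one, LinearMap.id_apply]

theorem inner_toEuclideanLin_le_add (A B : Matrix n n ℝ) (v : EuclideanSpace ℝ n) :
    ⟪v, toEuclideanLin A v⟫_ℝ ≤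
      ⟪v, toEuclideanLin B v⟫_ℝ + ‖toEuclideanCLM (𝕜 := ℝ) (A - B)‖ * ‖v‖ ^ 2 := by
  have hAB : toEuclideanLin (A - B) v = toEuclideanCLM (𝕜 := ℝ) (A - B) v := by
    rw [← coe_toEuclideanCLM_eq_toEuclideanLin]; rfl
  have := (toEuclideanCLM (𝕜 := ℝ) (A - B)).real_inner_self_apply_le v
  rw [← hAB, map_sub, LinearMap.sub_apply, inner_sub_right] at this
  linarith

theorem inner_toEuclideanLin_add_smul_le {E : Type*} [NormedAddCommGroup E] [NormedSpace ℝ E]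
    {Hess : E → Matrix n n ℝ} {L : ℝ}
    (hLip : ∀ x y, ‖toEuclideanCLM (𝕜 := ℝ) (Hess x - Hess y)‖ ≤ L * ‖x - y‖)
    (x : E) (v : EuclideanSpace ℝ n) {d : E} {t : ℝ} (ht : 0 ≤ t) :
    ⟪v, toEuclideanLin (Hess (x + t • d)) v⟫_ℝ ≤
      ⟪v, toEuclideanLin (Hess x) v⟫_ℝ + L * ‖d‖ * ‖v‖ ^ 2 * t := by
  have hLip_t := hLip (x + t • d) x
  rw [add_sub_cancel_left, norm_smul, Real.norm_of_nonneg ht] at hLip_t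
  calc _ ≤ ⟪v, toEuclideanLin (Hess x) v⟫_ℝ
        + ‖toEuclideanCLM (𝕜 := ℝ) (Hess (x + t • d) - Hess x)‖ * ‖v‖ ^ 2 :=
        inner_toEuclideanLin_le_add _ _ v
    _ ≤ ⟪v, toEuclideanLin (Hess x) v⟫_ℝ + L * (t * ‖d‖) * ‖v‖ ^ 2 := by gcongr
    _ = _ := by ring

end Matrix

theorem ncn_step_decrement_general {n : ℕ}
    (f : EuclideanSpace ℝ (Fin n) → ℝ) (L m : ℝ)
    (Hess : EuclideanSpace ℝ (Fin n) → Matrix (Fin n) (Fin n) ℝ)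
    (hf : ContDiff ℝ 2 f)
    (hHessf : ∀ y u v, iteratedFDeriv ℝ 2 f y ![u, v] = ⟪u, Matrix.toEuclideanLin (Hess y) v⟫_ℝ)
    (hLip : ∀ x y, ‖Matrix.toEuclideanCLM (𝕜 := ℝ) (Hess x - Hess y)‖ ≤ L * ‖x - y‖)
    (hm : 0 < m)
    (x : EuclideanSpace ℝ (Fin n))
    (H : Matrix (Fin n) (Fin n) ℝ)
    (hlow : (H - m • (1 : Matrix (Fin n) (Fin n) ℝ)).PosSemidef)
    (hHx : (H - Hess x).PosSemidef) :
    f (x + -(Matrix.toEuclideanLin H⁻¹ (gradient f x))) ≤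
      f x + (1/2) * ⟪gradient f x, -(Matrix.toEuclideanLin H⁻¹ (gradient f x))⟫_ℝ *
        (1 - L / (3 * m ^ 2) * ‖gradient f x‖) := by
  set g := gradient f x
  set v := Matrix.toEuclideanLin H⁻¹ g
  have hHv : Matrix.toEuclideanLin H v = g :=
    Matrix.toEuclideanLin_apply_toEuclideanLin_inv (hlow.posDef_of_sub_smul_one hm).isUnit g
  have hcoercive : m * ‖v‖ ^ 2 ≤ ⟪g, v⟫_ℝ := by
    simpa [real_inner_smul_right, real_inner_self_eq_norm_sq, hHv, real_inner_comm]
      using hlow.inner_toEuclideanLin_le v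
  have hcurv (t : ℝ) (ht : t ∈ Icc (0 : ℝ) 1) :
      iteratedFDeriv ℝ 2 f (x + t • -v) ![-v, -v] ≤ ⟪g, v⟫_ℝ + L * ‖v‖ ^ 3 * t := by
    rw [hHessf]
    calc _ ≤ ⟪-v, Matrix.toEuclideanLin (Hess x) (-v)⟫_ℝ + L * ‖-v‖ * ‖-v‖ ^ 2 * t :=
          Matrix.inner_toEuclideanLin_add_smul_le hLip x (-v) ht.1
      _ ≤ ⟪-v, Matrix.toEuclideanLin H (-v)⟫_ℝ + L * ‖-v‖ * ‖-v‖ ^ 2 * t := by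
          gcongr; exact hHx.inner_toEuclideanLin_le _
      _ = _ := by rw [norm_neg, map_neg, inner_neg_neg, hHv, real_inner_comm]; ring
  have htaylor := hf.apply_add_le_of_iteratedFDeriv_two_le hcurv
  rw [← inner_gradient_left, inner_neg_right] at htaylor
  have hcubic : L * ‖v‖ ^ 3 ≤ L * ⟪g, v⟫_ℝ * ‖g‖ / m ^ 2 := by
    rw [le_div_iff₀ (by positivity)]
    rcases eq_or_ne v 0 with hv | hv
    · simp [hv]
    have hL : 0 ≤ L := nonneg_of_mul_nonneg_left
      (by simpa using (norm_nonneg _).trans (hLip (x + v) x)) (norm_pos_iff.2 hv)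
    nlinarith [sq_mul_norm_pow_three_le hm.le hcoercive]
  have hrhs : 1 / 2 * ⟪g, -v⟫_ℝ * (1 - L / (3 * m ^ 2) * ‖g‖) =
      -⟪g, v⟫_ℝ + ⟪g, v⟫_ℝ / 2 + L * ⟪g, v⟫_ℝ * ‖g‖ / m ^ 2 / 6 := by
    rw [inner_neg_right]; field_simp; ring
  linarith

/-- One-step decrement bound for the Nonconvex Newton step `Δx = -H⁻¹∇f(x)`, where `H` is a
symmetric matrix with `m·I ⪯ H` and `∇²f(x) ⪯ H`, and `f` is twice continuously
differentiable with `L`-Lipschitz Hessian: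
`f(x + Δx) ≤ f(x) + (1/2)⟨∇f(x), Δx⟩(1 - (L/(3m²))‖∇f(x)‖)`.
Here `Hess y` is the Hessian matrix of `f` at `y`, characterized by
`⟪u, Hess y v⟫ = D²f(y)[u, v]`. -/
theorem ncn_step_decrement {n : ℕ}
    (f : EuclideanSpace ℝ (Fin n) → ℝ) (L m : ℝ)
    (Hess : EuclideanSpace ℝ (Fin n) → Matrix (Fin n) (Fin n) ℝ)
    (hf : ContDiff ℝ 2 f)
    (hHessf : ∀ y u v, iteratedFDeriv ℝ 2 f y ![u, v] = ⟪u, Matrix.toEuclideanLin (Hess y) v⟫_ℝ)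
    (hLip : ∀ x y, ‖Matrix.toEuclideanCLM (𝕜 := ℝ) (Hess x - Hess y)‖ ≤ L * ‖x - y‖)
    (hm : 0 < m)
    (x : EuclideanSpace ℝ (Fin n))
    (H : Matrix (Fin n) (Fin n) ℝ) (hH : H.IsHermitian)
    (hlow : (H - m • (1 : Matrix (Fin n) (Fin n) ℝ)).PosSemidef)
    (hHx : (H - Hess x).PosSemidef) :
    f (x + -(Matrix.toEuclideanLin H⁻¹ (gradient f x))) ≤
      f x + (1/2) * ⟪gradient f x, -(Matrix.toEuclideanLin H⁻¹ (gradient f x))⟫_ℝ *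
        (1 - L / (3 * m ^ 2) * ‖gradient f x‖) :=
  ncn_step_decrement_general f L m Hess hf hHessf hLip hm x H hlow hHx
end

section
/- Let C > 0 and ζ ∈ (0,1). Suppose a, b, g, a', b' are nonnegative reals with a ≥ b, g ≤ a + b, 2·C·g ≤ ζ, a' ≥ 2a − C·g², and b' ≤ C·g². Then a' ≥ (2 − ζ)·a and b' ≤ ζ·a; in particular b' ≤ a'. -/
/-- One-step saddle escape estimate: if `a ≥ b`, `g ≤ a + b`, `2Cg ≤ ζ`,
`a' ≥ 2a - Cg²` and `b' ≤ Cg²`, then `a' ≥ (2 - ζ)a` and `b' ≤ ζa`; in particular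
`b' ≤ a'`. -/
theorem one_step_escape_estimate (C ζ a b g a' b' : ℝ)
    (hC : 0 < C) (hζ : ζ ∈ Set.Ioo (0 : ℝ) 1)
    (ha : 0 ≤ a) (hb : 0 ≤ b) (hg : 0 ≤ g) (ha' : 0 ≤ a') (hb' : 0 ≤ b')
    (hba : b ≤ a) (hgab : g ≤ a + b) (hCg : 2 * C * g ≤ ζ)
    (ha'lb : 2 * a - C * g ^ 2 ≤ a') (hb'ub : b' ≤ C * g ^ 2) :
    (2 - ζ) * a ≤ a' ∧ b' ≤ ζ * a ∧ b' ≤ a' := by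
  obtain ⟨hζ0, hζ1⟩ := hζ
  have key : C * g ^ 2 ≤ ζ * a := by
    nlinarith [mul_le_mul_of_nonneg_right hCg hg, mul_le_mul_of_nonneg_left hgab (le_of_lt hζ0)]
  refine ⟨by linarith, by linarith, by nlinarith⟩
end

section
/- Let C > 0, ζ ∈ (0,1), and δ, ε > 0 with 0 < ε ≤ ζ·δ and C·δ ≤ 1/2. Let (a_k), (b_k), (g_k) be sequences of nonnegative reals such that for all k: g_k ≤ a_k + b_k, a_{k+1} ≥ 2a_k − C·g_k², and b_{k+1} ≤ C·g_k². Assume a_0 ≥ ε, C·g_0² < a_0, and let K be a natural number with K ≥ 1 + log(ζδ/ε)/log(2 − ζ). If g_k ≤ ζ·δ for all k < K, then a_K ≥ ζ·δ. -/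
set_option maxHeartbeats 1000000 in
/-- Saddle-escape proposition (sequence form): with `0 < ε ≤ ζδ`, `Cδ ≤ 1/2`, sequences
satisfying `g_k ≤ a_k + b_k`, `a_{k+1} ≥ 2a_k - Cg_k²`, `b_{k+1} ≤ Cg_k²`, `a_0 ≥ ε`,
`Cg_0² < a_0`, and `g_k ≤ ζδ` for all `k < K` where
`K ≥ 1 + log(ζδ/ε)/log(2 - ζ)`, one has `a_K ≥ ζδ`. -/
theorem saddle_escape_sequence (C ζ δ ε : ℝ) (hC : 0 < C)
    (hζ : ζ ∈ Set.Ioo (0 : ℝ) 1) (hδ : 0 < δ) (hε : 0 < ε)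
    (hεζδ : ε ≤ ζ * δ) (hCδ : C * δ ≤ 1/2)
    (a b g : ℕ → ℝ) (ha : ∀ k, 0 ≤ a k) (hb : ∀ k, 0 ≤ b k) (hg : ∀ k, 0 ≤ g k)
    (hgab : ∀ k, g k ≤ a k + b k)
    (hrecA : ∀ k, 2 * a k - C * g k ^ 2 ≤ a (k + 1))
    (hrecB : ∀ k, b (k + 1) ≤ C * g k ^ 2)
    (ha0 : ε ≤ a 0) (hg0 : C * g 0 ^ 2 < a 0)
    (K : ℕ) (hK : 1 + Real.log (ζ * δ / ε) / Real.log (2 - ζ) ≤ (K : ℝ))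
    (hgK : ∀ k < K, g k ≤ ζ * δ) :
    ζ * δ ≤ a K := by

  obtain ⟨hζ0, hζ1⟩ := hζ
  have hζδ : 0 < ζ * δ := mul_pos hζ0 hδ
  have h2ζ : (1:ℝ) < 2 - ζ := by linarith
  have hlog2ζ : 0 < Real.log (2 - ζ) := Real.log_pos h2ζ
  have hlognn : 0 ≤ Real.log (ζ * δ / ε) :=
    Real.log_nonneg (by rw [le_div_iff₀ hε]; linarith)
  have hK1 : 1 ≤ K := by
    by_contra h
    push_neg at h
    interval_cases K
    have h0 : (0:ℝ) ≤ Real.log (ζ*δ/ε) / Real.log (2-ζ) := div_nonneg hlognn hlog2ζ.le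
    simp only [Nat.cast_zero] at hK
    linarith
  have hsmall : ∀ k, g k ≤ ζ * δ → C * g k ^ 2 ≤ ζ / 2 * g k := by
    intro k hk
    nlinarith [hg k, hC.le, mul_le_mul_of_nonneg_left hk hC.le, hζ0.le,
      mul_le_mul_of_nonneg_right hCδ hζ0.le]
  have main : ∀ k, 1 ≤ k → k ≤ K →
      ε * (2 - ζ) ^ (k - 1) ≤ a k ∧ (k < K → C * g k ^ 2 ≤ ζ * a k) := by
    intro k hk1
    induction k, hk1 using Nat.le_induction with
    | base =>
      intro _
      have hA0 := hrecA 0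
      have ha1 : a 0 ≤ a 1 := by linarith
      constructor
      · simpa using le_trans ha0 ha1
      · intro h1K
        have h1 := hsmall 1 (hgK 1 h1K)
        have hb1 := hrecB 0
        have hgab1 := hgab 1
        have h3 : g 1 ≤ 2 * a 1 := by linarith
        have h4 := mul_le_mul_of_nonneg_left h3 (by positivity : (0:ℝ) ≤ ζ/2)
        linarith
    | succ k hk ih =>
      intro hkK
      obtain ⟨hak, hgk⟩ := ih (by omega)
      have hCgk := hgk (by omega)
      have hA := hrecA k
      have hstep : (2 - ζ) * a k ≤ a (k+1) := by linarith
      have hk' : k - 1 + 1 = k := Nat.succ_pred_eq_of_pos hk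
      have hpow : ε * (2 - ζ) ^ k ≤ a (k+1) := by
        have hp : (0:ℝ) ≤ (2-ζ)^(k-1) := by positivity
        have heq : (2-ζ)^k = (2-ζ)^(k-1) * (2-ζ) := by rw [← pow_succ, hk']
        nlinarith [hε.le]
      refine ⟨by simpa using hpow, ?_⟩
      intro hk1K
      have h1 := hsmall (k+1) (hgK (k+1) hk1K)
      have hb1 := hrecB k
      have hgab1 := hgab (k+1)
      have hak_le : a k ≤ a (k+1) := by nlinarith [ha k]
      have h2 : ζ * a k ≤ a (k+1) := by nlinarith [ha k]
      have h3 : g (k+1) ≤ 2 * a (k+1) := by linarith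
      have h4 := mul_le_mul_of_nonneg_left h3 (by positivity : (0:ℝ) ≤ ζ/2)
      linarith
  obtain ⟨hak, -⟩ := main K hK1 le_rfl
  have hKcast : ((K - 1 : ℕ) : ℝ) = (K : ℝ) - 1 := by
    rw [Nat.cast_sub hK1]; simp
  have hKlog : Real.log (ζ*δ/ε) ≤ ((K - 1 : ℕ) : ℝ) * Real.log (2-ζ) := by
    rw [hKcast]
    have h5 : Real.log (ζ*δ/ε) / Real.log (2-ζ) ≤ (K:ℝ) - 1 := by linarith
    rw [div_le_iff₀ hlog2ζ] at h5
    exact h5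
  have hfin : ζ*δ/ε ≤ (2-ζ)^(K-1) := by
    have h1 : (0:ℝ) < ζ*δ/ε := div_pos hζδ hε
    have h2 : (0:ℝ) < (2-ζ)^(K-1) := by positivity
    rw [← Real.log_pow] at hKlog
    exact (Real.log_le_log_iff h1 h2).mp hKlog
  rw [div_le_iff₀ hε] at hfin
  nlinarith [hak]
end

section
/- For every natural number n ≥ 1, the lower incomplete gamma function satisfies γ(n/2, n/2) ≥ (1/2)·Γ(n/2); equivalently, ∫₀^{n/2} t^{n/2 − 1} e^{−t} dt ≥ (1/2)·∫₀^{∞} t^{n/2 − 1} e^{−t} dt. In probabilistic terms, a chi-squared random variable with n degrees of freedom is at most n with probability at least 1/2. -/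
/-!
Write `g(t) = t^(s-1) e^(-t)` with `s = n/2 > 0`. The inversion `t ↦ s²/t` maps `(0, s)` onto
`(s, ∞)`, and for `0 < x ≤ s` the transported density satisfies `(s²/x²) g(s²/x) ≤ g(x)`:
after taking logarithms this is `2 log u ≤ u - u⁻¹` for `u = s/x ≥ 1`, i.e. `y ≤ sinh y`.
Hence the tail `∫_s^∞ g` is at most the head `∫_0^s g`, so the head is at least `Γ(s)/2`.
-/

open Real MeasureTheory Set

lemma Real.two_mul_log_le_sub_inv {u : ℝ} (hu : 1 ≤ u) : 2 * log u ≤ u - u⁻¹ := by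
  have h := self_le_sinh_iff.mpr (log_nonneg hu)
  rw [sinh_log (by positivity)] at h
  linarith

lemma image_sq_div_Ioo_zero {a : ℝ} (ha : 0 < a) : (fun x => a ^ 2 / x) '' Ioo 0 a = Ioi a := by
  ext y
  refine ⟨?_, fun hy => ?_⟩
  · rintro ⟨x, ⟨hx0, hxa⟩, rfl⟩
    rw [mem_Ioi, lt_div_iff₀ hx0]
    nlinarith
  · have hy0 : 0 < y := ha.trans hy
    refine ⟨a ^ 2 / y, ⟨by positivity, ?_⟩, by field_simp⟩
    rw [div_lt_iff₀ hy0]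
    nlinarith [mem_Ioi.mp hy]

theorem integral_Ioi_eq_integral_Ioo_comp_sq_div {E : Type*} [NormedAddCommGroup E]
    [NormedSpace ℝ E] (f : ℝ → E) {a : ℝ} (ha : 0 < a) :
    ∫ t in Ioi a, f t = ∫ x in Ioo 0 a, (a ^ 2 / x ^ 2) • f (a ^ 2 / x) := by
  have hderiv : ∀ x ∈ Ioo 0 a,
      HasDerivWithinAt (fun x => a ^ 2 / x) (-(a ^ 2 / x ^ 2)) (Ioo 0 a) x := fun x hx => by
    simpa [div_eq_mul_inv] using ((hasDerivAt_inv hx.1.ne').const_mul (a ^ 2)).hasDerivWithinAt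
  have hinj : InjOn (fun x => a ^ 2 / x) (Ioo 0 a) := fun x _ y _ hxy => by
    simpa [div_eq_mul_inv, ha.ne'] using hxy
  rw [← image_sq_div_Ioo_zero ha,
    integral_image_eq_integral_abs_deriv_smul measurableSet_Ioo hderiv hinj]
  refine setIntegral_congr_fun measurableSet_Ioo fun x hx => ?_
  rw [abs_neg, abs_of_nonneg (by positivity)]

lemma gammaIntegrand_comp_sq_div_le {s x : ℝ} (hx : 0 < x) (hxs : x ≤ s) :
    s ^ 2 / x ^ 2 * (exp (-(s ^ 2 / x)) * (s ^ 2 / x) ^ (s - 1)) ≤ exp (-x) * x ^ (s - 1) := by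
  have hs : 0 < s := hx.trans_le hxs
  have key : s * (2 * log (s / x)) ≤ s * (s / x - (s / x)⁻¹) := mul_le_mul_of_nonneg_left
    (two_mul_log_le_sub_inv ((one_le_div hx).mpr hxs)) hs.le
  rw [log_div hs.ne' hx.ne', inv_div] at key
  rw [← log_le_log_iff (by positivity) (by positivity), log_mul (by positivity) (by positivity),
    log_mul (by positivity) (by positivity), log_mul (by positivity) (by positivity),
    log_exp, log_exp, log_rpow (by positivity), log_rpow hx,
    log_div (by positivity) (by positivity), log_div (by positivity) hx.ne', log_pow, log_pow]
  have hsq : s * (s / x - x / s) = s ^ 2 / x - x := by field_simp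
  push_cast
  linarith

lemma integral_Ioi_gammaIntegrand_le {s : ℝ} (hs : 0 < s) :
    ∫ t in Ioi s, exp (-t) * t ^ (s - 1) ≤ ∫ t in Ioo 0 s, exp (-t) * t ^ (s - 1) := by
  rw [integral_Ioi_eq_integral_Ioo_comp_sq_div _ hs]
  refine integral_mono_of_nonneg ?_
    ((GammaIntegral_convergent hs).mono_set Ioo_subset_Ioi_self) ?_
  all_goals filter_upwards [self_mem_ae_restrict measurableSet_Ioo] with x hx
  · have := hx.1
    positivity
  · exact gammaIntegrand_comp_sq_div_le hx.1 hx.2.le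

theorem Real.half_Gamma_le_integral {s : ℝ} (hs : 0 < s) :
    1 / 2 * Gamma s ≤ ∫ t in (0 : ℝ)..s, t ^ (s - 1) * exp (-t) := by
  have hint := GammaIntegral_convergent hs
  have hsplit : Gamma s =
      (∫ t in Ioo 0 s, exp (-t) * t ^ (s - 1)) + ∫ t in Ioi s, exp (-t) * t ^ (s - 1) := by
    rw [Gamma_eq_integral hs, ← integral_Ioc_eq_integral_Ioo, ← Ioc_union_Ioi_eq_Ioi hs.le,
      setIntegral_union (Ioc_disjoint_Ioi le_rfl) measurableSet_Ioi
        (hint.mono_set Ioc_subset_Ioi_self) (hint.mono_set (Ioi_subset_Ioi hs.le))]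
  have hhead : ∫ t in (0 : ℝ)..s, t ^ (s - 1) * exp (-t) =
      ∫ t in Ioo 0 s, exp (-t) * t ^ (s - 1) := by
    simp_rw [intervalIntegral.integral_of_le hs.le, integral_Ioc_eq_integral_Ioo, mul_comm]
  linarith [integral_Ioi_gammaIntegrand_le hs]

theorem lower_incomplete_gamma_ge_half_general (n : ℕ) :
    (1/2) * Real.Gamma ((n : ℝ) / 2) ≤
      ∫ t in (0 : ℝ)..((n : ℝ) / 2), t ^ ((n : ℝ) / 2 - 1) * Real.exp (-t) := by
  rcases n.eq_zero_or_pos with rfl | hn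
  · simp -- `Γ(0) = 0` in Mathlib
  · exact half_Gamma_le_integral (by positivity)

/-- For every `n ≥ 1`, the lower incomplete gamma function satisfies
`γ(n/2, n/2) ≥ (1/2)Γ(n/2)`, i.e. `∫₀^{n/2} t^{n/2-1} e^{-t} dt ≥ (1/2)Γ(n/2)`.
Probabilistically: a chi-squared random variable with `n` degrees of freedom is at most `n`
with probability at least `1/2`. -/
theorem lower_incomplete_gamma_ge_half (n : ℕ) (hn : 1 ≤ n) :
    (1/2) * Real.Gamma ((n : ℝ) / 2) ≤
      ∫ t in (0 : ℝ)..((n : ℝ) / 2), t ^ ((n : ℝ) / 2 - 1) * Real.exp (-t) :=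
  lower_incomplete_gamma_ge_half_general n
end
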